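/- arXiv:1912.10259 — 2 statements merged into one kernel-verified Lean document; each statement's English description precedes it below -/
import Mathlib

section
/- Let r ∈ ℚ. For every n ∈ ℕ, the sum S(n) = C(2n, n) · Σ_{k=0}^{2n} ((−r)_k / k!) · C(3n−k, 2n−k) satisfies the closed form S(n) · (1−r)_n · (n!)² = 27^n · ((1−r)/3)_n · ((2−r)/3)_n · ((3−r)/3)_n. -/
/-!
The `k`-th summand is `multichoose (-r) k * multichoose (n + 1) (2n - k)`, so by the
Chu–Vandermonde identity the sum is `(n + 1 - r)_{2n} / (2n)!`. As `C(2n, n) (n!)² = (2n)!` and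
`(1 - r)_n (n + 1 - r)_{2n} = (1 - r)_{3n}`, the left-hand side is `(1 - r)_{3n}`, which Gauss's
multiplication formula `(x)_{3n} = 27^n (x/3)_n ((x+1)/3)_n ((x+2)/3)_n` turns into the right-hand
side.
-/

open Finset Polynomial

namespace Ring

variable {R : Type*}

theorem multichoose_eq_negOnePow_smul_choose_neg [NonAssocRing R] [Pow R ℕ] [BinomialRing R]
    [NatPowAssoc R] (r : R) (n : ℕ) :
    multichoose r n = Int.negOnePow n • choose (-r) n := by
  rw [choose_neg', smul_smul, ← Int.negOnePow_add, ← two_mul, Int.negOnePow_two_mul, one_smul]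

theorem multichoose_add [Ring R] [BinomialRing R] [NatPowAssoc R] {r s : R} (h : Commute r s)
    (k : ℕ) : multichoose (r + s) k =
      ∑ ij ∈ antidiagonal k, multichoose r ij.1 * multichoose s ij.2 := by
  rw [multichoose_eq_negOnePow_smul_choose_neg, neg_add, add_choose_eq k h.neg_left.neg_right,
    smul_sum]
  refine sum_congr rfl fun ij hij => ?_
  rw [multichoose_eq_negOnePow_smul_choose_neg r, multichoose_eq_negOnePow_smul_choose_neg s,
    smul_mul_smul_comm, ← Int.negOnePow_add, ← Nat.cast_add, mem_antidiagonal.mp hij]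

theorem multichoose_eq_ascPochhammer_eval_div {K : Type*} [Field K] [CharZero K] [BinomialRing K]
    (x : K) (k : ℕ) : multichoose x k = (ascPochhammer K k).eval x / k.factorial := by
  rw [eq_div_iff (Nat.cast_ne_zero.mpr k.factorial_ne_zero), mul_comm, ← nsmul_eq_mul,
    factorial_nsmul_multichoose_eq_ascPochhammer, Polynomial.ascPochhammer_smeval_eq_eval]

theorem multichoose_natCast_add_one [NonAssocRing R] [Pow R ℕ] [BinomialRing R] [NatPowAssoc R]
    (p j : ℕ) : multichoose ((p : R) + 1) j = (p + j).choose j := by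
  rw [multichoose_eq, ← choose_natCast]
  congr 1
  push_cast
  abel

end Ring

theorem ascPochhammer_eval_eq_prod_range {S : Type*} [CommSemiring S] (n : ℕ) (x : S) :
    (ascPochhammer S n).eval x = ∏ i ∈ range n, (x + i) := by
  induction n with
  | zero => simp
  | succ n ih => rw [ascPochhammer_succ_eval, ih, prod_range_succ]

theorem ascPochhammer_add_eval {S : Type*} [CommSemiring S] (n m : ℕ) (x : S) :
    (ascPochhammer S (n + m)).eval x =
      (ascPochhammer S n).eval x * (ascPochhammer S m).eval (x + n) := by
  rw [← ascPochhammer_mul, eval_mul, eval_comp, eval_add, eval_X, eval_natCast]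

/-- Gauss's multiplication formula for the Pochhammer symbol. -/
theorem ascPochhammer_mul_eval {K : Type*} [Field K] {m : ℕ} (hm : (m : K) ≠ 0) (n : ℕ) (x : K) :
    (ascPochhammer K (m * n)).eval x =
      (m : K) ^ (m * n) * ∏ i ∈ range m, (ascPochhammer K n).eval ((x + i) / m) := by
  induction n with
  | zero => simp
  | succ n ih =>
    have factor : ∀ i ∈ range m, (m : K) * ((x + i) / m + n) = x + ↑(m * n) + i := by
      intro i _
      push_cast
      field_simp
      ring
    simp only [mul_add_one, ascPochhammer_add_eval, ih, ascPochhammer_succ_eval, prod_mul_distrib,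
      pow_add, ascPochhammer_eval_eq_prod_range m, ← prod_congr rfl factor, prod_const, card_range]
    ring

theorem sum_ascPochhammer_div_factorial_mul_choose {K : Type*} [Field K] [CharZero K] (x : K)
    (p m : ℕ) :
    ∑ k ∈ range (m + 1),
        (ascPochhammer K k).eval x / k.factorial * ((p + m - k).choose (m - k) : K) =
      (ascPochhammer K m).eval (x + p + 1) / m.factorial := by
  have term : ∀ k ∈ range (m + 1),
      (ascPochhammer K k).eval x / k.factorial * ((p + m - k).choose (m - k) : K) =
        Ring.multichoose x k * Ring.multichoose ((p : K) + 1) (m - k) := by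
    intro k hk
    rw [Ring.multichoose_natCast_add_one, Ring.multichoose_eq_ascPochhammer_eval_div,
      Nat.add_sub_assoc (Nat.lt_succ_iff.mp (mem_range.mp hk))]
  rw [sum_congr rfl term, ← Nat.sum_antidiagonal_eq_sum_range_succ
      (fun i j => Ring.multichoose x i * Ring.multichoose ((p : K) + 1) j),
    ← Ring.multichoose_add (Commute.all _ _), ← Ring.multichoose_eq_ascPochhammer_eval_div,
    add_assoc]

/-- Closed form for `S(n) = C(2n,n) · ∑_{k=0}^{2n} ((-r)_k / k!) · C(3n-k, 2n-k)`:
`S(n) · (1-r)_n · (n!)² = 27^n · ((1-r)/3)_n · ((2-r)/3)_n · ((3-r)/3)_n`. -/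
theorem diagonal_closed_form (r : ℚ) (n : ℕ) :
    ((Nat.choose (2 * n) n : ℚ) *
        ∑ k ∈ range (2 * n + 1),
          ((ascPochhammer ℚ k).eval (-r) / (Nat.factorial k : ℚ)) *
            (Nat.choose (3 * n - k) (2 * n - k) : ℚ)) *
      (ascPochhammer ℚ n).eval (1 - r) * (Nat.factorial n : ℚ) ^ 2 =
    27 ^ n * (ascPochhammer ℚ n).eval ((1 - r) / 3) *
      (ascPochhammer ℚ n).eval ((2 - r) / 3) *
      (ascPochhammer ℚ n).eval ((3 - r) / 3) := by
  have inner := sum_ascPochhammer_div_factorial_mul_choose (-r) n (2 * n)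
  rw [show n + 2 * n = 3 * n by ring, show -r + n + 1 = 1 - r + n by ring] at inner
  have central : (Nat.choose (2 * n) n : ℚ) * (n.factorial : ℚ) ^ 2 = (2 * n).factorial := by
    have h := Nat.add_choose_mul_factorial_mul_factorial n n
    rw [← two_mul] at h
    rw [sq, ← mul_assoc]
    exact_mod_cast h
  have split := ascPochhammer_add_eval (S := ℚ) n (2 * n) (1 - r)
  have gauss := ascPochhammer_mul_eval (K := ℚ) (m := 3) (by norm_num) n (1 - r)
  rw [show n + 2 * n = 3 * n by ring] at split
  calc _ = (Nat.choose (2 * n) n : ℚ) * (n.factorial : ℚ) ^ 2 / (2 * n).factorial *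
        ((ascPochhammer ℚ n).eval (1 - r) * (ascPochhammer ℚ (2 * n)).eval (1 - r + n)) := by
        rw [inner]; ring
    _ = (ascPochhammer ℚ (3 * n)).eval (1 - r) := by
        rw [central, div_self (Nat.cast_ne_zero.mpr (Nat.factorial_ne_zero _)), one_mul, split]
    _ = _ := by
        rw [gauss, pow_mul]
        norm_num [prod_range_succ]
        ring_nf
end

section
/- For every n ∈ ℕ, Σ_{k=0}^{2n} Σ_{j=0}^{n} ((−2/3)_k / k!) · C(k,j) · 2^{k−j} · C(3n−k, n) · C(2n−k, n−j) = 27^n · (1/9)_n (4/9)_n (7/9)_n / ((2/3)_n · (n!)²). (This expresses, in coefficient form, that the diagonal of (1−x−2y)^{2/3}/(1−x−y−z) equals ₃F₂([1/9, 4/9, 7/9], [2/3, 1], 27x).) -/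
/-!
Write `M(a, k) = (a)_k / k!` (`Ring.multichoose a k`), the coefficient of `x^k` in
`(1 - x)^{-a}`. With `-2/3` replaced by an arbitrary `a`, the double sum equals
`4^n M(a + 2n + 1, n) M((a + 1) / 2, n)`.

Comparing coefficients of `X^n` in `(X + 2)^k (X + 1)^{2n-k} = Σ_i C(k, i) (X + 1)^{2n-i}` turns
the sum over `j` into `Σ_i C(k, i) C(2n - i, n)`. After exchanging the sums, the sum over `k` is
a Chu–Vandermonde convolution of `M(a + i, ·)` with `C(n + ·, n) = M(n + 1, ·)`, and what is
left is `M(a + 2n + 1, n) Σ_i M(a, i) M(a + n + 1 + i, n - i)`. This last sum is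
`4^n M((a + 1) / 2, n)` by a Wilf–Zeilberger recurrence. At `a = -2/3` the duplication and
triplication formulas for the Pochhammer symbol give
`(1/3)_{3n} = 27^n (1/9)_n (4/9)_n (7/9)_n = 4^n (1/6)_n (2/3)_n (1/3 + 2n)_n`, which is the
stated closed form.
-/

open Finset Polynomial Nat

theorem ascPochhammer_eval_add {R : Type*} [CommSemiring R] (x : R) (m n : ℕ) :
    (ascPochhammer R (m + n)).eval x =
      (ascPochhammer R m).eval x * (ascPochhammer R n).eval (x + m) := by
  simp [← ascPochhammer_mul, eval_comp]

theorem Ring.add_multichoose_eq {R : Type*} [Ring R] [BinomialRing R] {r s : R} (k : ℕ)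
    (h : Commute r s) :
    multichoose (r + s) k = ∑ ij ∈ antidiagonal k, multichoose r ij.1 * multichoose s ij.2 := by
  have h := add_choose_eq k h.neg_left.neg_right
  simp only [← neg_add, choose_neg', smul_mul_smul_comm] at h
  rw [← smul_left_cancel_iff (Int.negOnePow k), h, smul_sum]
  refine sum_congr rfl fun ij hij => ?_
  rw [← Int.negOnePow_add, ← Nat.cast_add, mem_antidiagonal.1 hij]

theorem Ring.multichoose_natCast_add_one_s10 {R : Type*} [Ring R] [BinomialRing R] (n m : ℕ) :
    multichoose ((n : R) + 1) m = (n + m).choose n := by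
  rw [multichoose_eq, show (n : R) + 1 + m - 1 = ((n + m : ℕ) : R) by push_cast; abel,
    choose_natCast, Nat.choose_symm_add]

theorem sum_choose_mul_two_pow_mul_choose {k N : ℕ} (hk : k ≤ N) (n : ℕ) :
    ∑ j ∈ range (n + 1), k.choose j * 2 ^ (k - j) * (N - k).choose (n - j) =
      ∑ i ∈ range (N + 1), k.choose i * (N - i).choose n := by
  have hpoly : (X + C 2 : ℕ[X]) ^ k * (X + 1) ^ (N - k) =
      ∑ i ∈ range (k + 1), (k.choose i : ℕ[X]) * (X + 1) ^ (N - i) := by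
    rw [show (X + C 2 : ℕ[X]) = 1 + (X + 1) by rw [C_ofNat]; ring, add_pow, sum_mul]
    refine sum_congr rfl fun i hi => ?_
    rw [one_pow, one_mul, mul_right_comm, ← pow_add, mul_comm,
      show k - i + (N - k) = N - i by have := mem_range.1 hi; omega]
  have hcoeff := congrArg (coeff · n) hpoly
  simp only [finsetSum_coeff, coeff_natCast_mul, coeff_X_add_one_pow, Nat.cast_id] at hcoeff
  simp only [coeff_mul, Nat.sum_antidiagonal_eq_sum_range_succ_mk, coeff_X_add_C_pow,
    coeff_X_add_one_pow, Nat.cast_id] at hcoeff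
  calc _ = ∑ j ∈ range (n + 1), 2 ^ (k - j) * k.choose j * (N - k).choose (n - j) :=
        sum_congr rfl fun j _ => by ring
    _ = ∑ i ∈ range (k + 1), k.choose i * (N - i).choose n := hcoeff
    _ = _ := sum_subset (fun i hi => by simp only [mem_range] at *; omega) fun i _ hi => by
        rw [choose_eq_zero_of_lt (by simpa using hi), zero_mul]

section WZ

variable {R : Type*} [CommRing R]

noncomputable def wzSummand (a : R) (n i : ℕ) : R :=
  n.choose i * (ascPochhammer R i).eval a * (ascPochhammer R (n - i)).eval (a + n + 1 + i)

-- Zeilberger's certificate for the recurrence of `∑ i, wzSummand a n i`.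
noncomputable def wzCertificate (a : R) (n i : ℕ) : R :=
  ((n.choose i : R) - (n + 1).choose i) * (ascPochhammer R i).eval a *
    (ascPochhammer R (n + 1 - i)).eval (a + n + 1 + i)

theorem wzSummand_succ_sub (a : R) {n i : ℕ} (hi : i ≤ n + 1) :
    wzSummand a (n + 1) i - 2 * (a + 2 * n + 1) * wzSummand a n i =
      wzCertificate a n (i + 1) - wzCertificate a n i := by
  rcases hi.lt_or_eq with hi | rfl
  · obtain ⟨m, rfl⟩ := Nat.exists_eq_add_of_le (Nat.lt_succ_iff.1 hi)
    set Y : R := a + 2 * i + m + 2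
    have hPm : (ascPochhammer R (m + 1)).eval Y = (ascPochhammer R m).eval Y * (Y + m) :=
      ascPochhammer_succ_eval m Y
    have hQm : (ascPochhammer R (m + 1)).eval (Y - 1) = (Y - 1) * (ascPochhammer R m).eval Y := by
      simp [ascPochhammer_succ_left, eval_comp]
    have hQ : (ascPochhammer R m).eval (Y - 1) * (Y - 1 + m) =
        (Y - 1) * (ascPochhammer R m).eval Y := by
      rw [← hQm, ascPochhammer_succ_eval]
    have hC : ((i + m).choose i * (i + m + 1) : R) = (i + m + 1).choose i * (m + 1) := by
      have := Nat.choose_mul_succ_eq (i + m) i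
      rw [show i + m + 1 - i = m + 1 by omega] at this
      exact_mod_cast congrArg (Nat.cast (R := R)) this
    simp only [wzSummand, wzCertificate, show i + m + 1 - i = m + 1 by omega,
      show i + m - i = m by omega, show i + m + 1 - (i + 1) = m by omega,
      Nat.choose_succ_succ' (i + m) i]
    rw [show a + ↑(i + m + 1) + 1 + ↑i = Y by push_cast; ring,
      show a + ↑(i + m) + 1 + ↑i = Y - 1 by push_cast; ring,
      show a + ↑(i + m) + 1 + ↑(i + 1) = Y by push_cast; ring, hPm, hQm,
      ascPochhammer_succ_eval i a]
    push_cast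
    linear_combination (-2 * (ascPochhammer R i).eval a * ((i + m).choose i : R)) * hQ +
      (-(ascPochhammer R i).eval a * (ascPochhammer R m).eval Y) * hC
  · simp [wzSummand, wzCertificate, choose_eq_zero_of_lt]

theorem sum_wzSummand_succ (a : R) (n : ℕ) :
    ∑ i ∈ range (n + 2), wzSummand a (n + 1) i =
      2 * (a + 2 * n + 1) * ∑ i ∈ range (n + 1), wzSummand a n i := by
  have hG0 : wzCertificate a n 0 = 0 := by simp [wzCertificate]
  have hGtop : wzCertificate a n (n + 2) = 0 := by simp [wzCertificate, choose_eq_zero_of_lt]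
  have hFtop : wzSummand a n (n + 1) = 0 := by simp [wzSummand]
  calc _ = ∑ i ∈ range (n + 2), (2 * (a + 2 * n + 1) * wzSummand a n i +
          (wzCertificate a n (i + 1) - wzCertificate a n i)) :=
        sum_congr rfl fun i hi => by
          rw [← wzSummand_succ_sub a (mem_range_succ_iff.1 hi)]; ring
    _ = _ := by
        rw [sum_add_distrib, sum_range_sub, hG0, hGtop, ← mul_sum, sum_range_succ _ (n + 1),
          hFtop]
        ring

end WZ

section Field

variable {K : Type*} [Field K] [CharZero K]

theorem Ring.multichoose_eq_eval_div (a : K) (k : ℕ) :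
    multichoose a k = (ascPochhammer K k).eval a / k ! := by
  rw [eq_div_iff (Nat.cast_ne_zero.2 k.factorial_ne_zero), mul_comm, ← nsmul_eq_mul,
    factorial_nsmul_multichoose_eq_ascPochhammer, ascPochhammer_smeval_eq_eval]

theorem Ring.multichoose_mul_choose (a : K) {i k : ℕ} (h : i ≤ k) :
    multichoose a k * k.choose i = multichoose a i * multichoose (a + i) (k - i) := by
  obtain ⟨m, rfl⟩ := Nat.exists_eq_add_of_le h
  simp only [multichoose_eq_eval_div, Nat.cast_choose K h, ascPochhammer_eval_add,
    Nat.add_sub_cancel_left]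
  have := (i + m).factorial_ne_zero
  have := i.factorial_ne_zero
  have := m.factorial_ne_zero
  field_simp

theorem ascPochhammer_eval_two_mul (x : K) (n : ℕ) :
    (ascPochhammer K (2 * n)).eval x =
      4 ^ n * (ascPochhammer K n).eval (x / 2) * (ascPochhammer K n).eval ((x + 1) / 2) := by
  induction n with
  | zero => simp
  | succ n ih =>
    simp only [show 2 * (n + 1) = 2 * n + 1 + 1 by ring, ascPochhammer_succ_eval, ih]
    push_cast; ring

theorem ascPochhammer_eval_three_mul (x : K) (n : ℕ) :
    (ascPochhammer K (3 * n)).eval x = 27 ^ n * (ascPochhammer K n).eval (x / 3) *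
      (ascPochhammer K n).eval ((x + 1) / 3) * (ascPochhammer K n).eval ((x + 2) / 3) := by
  induction n with
  | zero => simp
  | succ n ih =>
    simp only [show 3 * (n + 1) = 3 * n + 1 + 1 + 1 by ring, ascPochhammer_succ_eval, ih]
    push_cast; ring

theorem sum_multichoose_mul_choose_mul_choose (a : K) {i N : ℕ} (hi : i ≤ N) (n : ℕ) :
    ∑ k ∈ range (N + 1), Ring.multichoose a k * k.choose i * (n + (N - k)).choose n =
      Ring.multichoose a i * Ring.multichoose (a + i + (n + 1)) (N - i) := by
  calc _ = ∑ k ∈ Ico i (N + 1), Ring.multichoose a k * k.choose i * (n + (N - k)).choose n := by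
        refine (sum_subset (fun k hk => ?_) fun k hk hki => ?_).symm
        · simp only [mem_Ico, mem_range] at *; omega
        · simp only [mem_Ico, mem_range] at hk hki
          rw [choose_eq_zero_of_lt (by omega), Nat.cast_zero, mul_zero, zero_mul]
    _ = ∑ m ∈ range (N - i + 1),
          Ring.multichoose a i *
            (Ring.multichoose (a + i) m * Ring.multichoose ((n : K) + 1) (N - i - m)) := by
        rw [sum_Ico_eq_sum_range, show N + 1 - i = N - i + 1 by omega]
        refine sum_congr rfl fun m hm => ?_
        rw [Ring.multichoose_mul_choose a (Nat.le_add_right i m), Ring.multichoose_natCast_add_one_s10,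
          Nat.add_sub_cancel_left, show N - (i + m) = N - i - m by omega, mul_assoc]
    _ = _ := by
        rw [← mul_sum, Ring.add_multichoose_eq _ (Commute.all _ _),
          Nat.sum_antidiagonal_eq_sum_range_succ fun p q =>
            Ring.multichoose (a + i) p * Ring.multichoose ((n : K) + 1) q]

theorem sum_wzSummand (a : K) (n : ℕ) :
    ∑ i ∈ range (n + 1), wzSummand a n i = 4 ^ n * (ascPochhammer K n).eval ((a + 1) / 2) := by
  induction n with
  | zero => simp [wzSummand]
  | succ n ih =>
    rw [sum_wzSummand_succ, ih, ascPochhammer_succ_eval]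
    ring

theorem sum_multichoose_mul_multichoose (a : K) (n : ℕ) :
    ∑ i ∈ range (n + 1), Ring.multichoose a i * Ring.multichoose (a + n + 1 + i) (n - i) =
      4 ^ n * Ring.multichoose ((a + 1) / 2) n := by
  have hterm : ∀ i ∈ range (n + 1),
      Ring.multichoose a i * Ring.multichoose (a + n + 1 + i) (n - i) = wzSummand a n i / n ! := by
    intro i hi
    have := i.factorial_ne_zero
    have := (n - i).factorial_ne_zero
    have := n.factorial_ne_zero
    rw [Ring.multichoose_eq_eval_div, Ring.multichoose_eq_eval_div, wzSummand,
      Nat.cast_choose K (mem_range_succ_iff.1 hi)]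
    field_simp
  rw [sum_congr rfl hterm, ← sum_div, sum_wzSummand, Ring.multichoose_eq_eval_div, mul_div_assoc]

/-- The coefficient of `x^n y^n z^n` in `(1 - x - 2y)^{-a} / (1 - x - y - z)`: `k` is the exponent
of `x + 2y` and `j` that of `x` in its expansion. -/
noncomputable def diagonalCoeff (a : K) (n : ℕ) : K :=
  ∑ k ∈ range (2 * n + 1), ∑ j ∈ range (n + 1),
    Ring.multichoose a k * k.choose j * 2 ^ (k - j) * (3 * n - k).choose n *
      (2 * n - k).choose (n - j)

theorem diagonalCoeff_eq (a : K) (n : ℕ) :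
    diagonalCoeff a n =
      4 ^ n * Ring.multichoose (a + 2 * n + 1) n * Ring.multichoose ((a + 1) / 2) n := by
  calc diagonalCoeff a n
      = ∑ k ∈ range (2 * n + 1), Ring.multichoose a k * (n + (2 * n - k)).choose n *
          ∑ i ∈ range (2 * n + 1), (k.choose i * (2 * n - i).choose n : K) := by
        refine sum_congr rfl fun k hk => ?_
        have hk := mem_range_succ_iff.1 hk
        have hinner := congrArg (Nat.cast (R := K)) (sum_choose_mul_two_pow_mul_choose hk n)
        push_cast at hinner
        rw [← hinner, mul_sum, show 3 * n - k = n + (2 * n - k) by omega]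
        exact sum_congr rfl fun j _ => by ring
    _ = ∑ i ∈ range (2 * n + 1), ((2 * n - i).choose n : K) * ∑ k ∈ range (2 * n + 1),
          Ring.multichoose a k * k.choose i * (n + (2 * n - k)).choose n := by
        simp only [mul_sum]
        rw [sum_comm]
        exact sum_congr rfl fun i _ => sum_congr rfl fun k _ => by ring
    _ = ∑ i ∈ range (2 * n + 1), ((2 * n - i).choose n : K) *
          (Ring.multichoose a i * Ring.multichoose (a + i + (n + 1)) (2 * n - i)) :=
        sum_congr rfl fun i hi => by
          rw [sum_multichoose_mul_choose_mul_choose a (mem_range_succ_iff.1 hi)]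
    _ = ∑ i ∈ range (n + 1), Ring.multichoose (a + 2 * n + 1) n *
          (Ring.multichoose a i * Ring.multichoose (a + n + 1 + i) (n - i)) := by
        refine (sum_subset (fun i hi => ?_) fun i hi hin => ?_).symm.trans
          (sum_congr rfl fun i hi => ?_)
        · simp only [mem_range] at *; omega
        · rw [choose_eq_zero_of_lt (by simp only [mem_range] at hi hin; omega), Nat.cast_zero,
            zero_mul]
        · have hi := mem_range_succ_iff.1 hi
          rw [choose_symm_of_eq_add (by omega : 2 * n - i = n + (n - i)), mul_comm, mul_assoc,
            Ring.multichoose_mul_choose _ (by omega : n - i ≤ 2 * n - i),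
            show 2 * n - i - (n - i) = n by omega, Nat.cast_sub hi,
            show a + i + (n + 1) + (n - i) = a + 2 * n + 1 by ring,
            show a + i + (n + 1) = a + n + 1 + i by ring]
          ring
    _ = _ := by rw [← mul_sum, sum_multichoose_mul_multichoose]; ring

end Field

/-- The diagonal of `(1-x-2y)^{2/3}/(1-x-y-z)` equals
`₃F₂([1/9, 4/9, 7/9], [2/3, 1], 27x)`, stated coefficient-wise. -/
theorem diagonal_1_x_2y_pow_two_thirds (n : ℕ) :
    ∑ k ∈ range (2 * n + 1), ∑ j ∈ range (n + 1),
        ((ascPochhammer ℚ k).eval (-(2 / 3)) / (Nat.factorial k : ℚ)) *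
          (Nat.choose k j : ℚ) * (2 : ℚ) ^ (k - j) *
          (Nat.choose (3 * n - k) n : ℚ) * (Nat.choose (2 * n - k) (n - j) : ℚ) =
    27 ^ n * (ascPochhammer ℚ n).eval (1 / 9) * (ascPochhammer ℚ n).eval (4 / 9) *
        (ascPochhammer ℚ n).eval (7 / 9) /
      ((ascPochhammer ℚ n).eval (2 / 3) * (Nat.factorial n : ℚ) ^ 2) := by
  simp only [← Ring.multichoose_eq_eval_div]
  rw [← diagonalCoeff, diagonalCoeff_eq, Ring.multichoose_eq_eval_div,
    Ring.multichoose_eq_eval_div, show -(2 / 3 : ℚ) + 2 * n + 1 = 1 / 3 + 2 * n by ring,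
    show (-(2 / 3 : ℚ) + 1) / 2 = 1 / 6 by norm_num]
  have h2n := ascPochhammer_eval_two_mul (1 / 3 : ℚ) n
  have h3n := ascPochhammer_eval_three_mul (1 / 3 : ℚ) n
  have hsplit := ascPochhammer_eval_add (1 / 3 : ℚ) (2 * n) n
  rw [show 2 * n + n = 3 * n by ring] at hsplit
  norm_num at h2n h3n hsplit
  have hpos : 0 < (ascPochhammer ℚ n).eval (2 / 3) := ascPochhammer_pos n _ (by norm_num)
  rw [eq_div_iff (by positivity), ← h3n, hsplit, h2n]
  field_simp
end
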